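/- For every integer p ≥ 4, the maximum order of an induced forest of the generalized Sierpiński triangle graph Ŝ_p^1 equals 3p/2 if p is even, and equals (3p − 1)/2 if p is odd. -/

import Mathlib

open SimpleGraph

/-- The Sierpinski graph `S_p^n` on vertex set `P^n`: two distinct vertices are adjacent
iff they can be written as `s i j^(d-1)` and `s j i^(d-1)`. -/
def sierpinski (p n : Nat) : SimpleGraph (Fin n → Fin p) :=
  SimpleGraph.fromRel (fun u v =>
    ∃ t : Fin n, ∃ i j : Fin p, i ≠ j ∧
      (∀ k, k < t → u k = v k) ∧ u t = i ∧ v t = j ∧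
      (∀ k, t < k → u k = j ∧ v k = i))

/-- `X` is a feedback vertex set of `G` if deleting it leaves an acyclic graph. -/
def IsFeedbackVertexSet {V : Type*} (G : SimpleGraph V) (X : Set V) : Prop :=
  (G.induce Xᶜ).IsAcyclic

/-- The feedback vertex number: the minimum cardinality of a feedback vertex set. -/
noncomputable def feedbackNumber {V : Type*} (G : SimpleGraph V) : Nat :=
  sInf {k | ∃ X : Finset V, X.card = k ∧ IsFeedbackVertexSet G ↑X}

/-- The maximum number of vertices of an induced forest of `G`. -/
noncomputable def maxInducedForest {V : Type*} (G : SimpleGraph V) : Nat :=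
  sSup {k | ∃ Y : Finset V, Y.card = k ∧ (G.induce (↑Y : Set V)).IsAcyclic}

/-- The non-clique edges of `S_p^(n+1)`: edges `{s i j^l, s j i^l}` with `l ≥ 1`,
i.e. adjacency witnessed at a position `t` with `t < n`. -/
def nonCliqueRel (p n : Nat) (u v : Fin (n+1) → Fin p) : Prop :=
  ∃ t : Fin (n+1), (t : Nat) < n ∧ ∃ i j : Fin p, i ≠ j ∧
    (∀ k, k < t → u k = v k) ∧ u t = i ∧ v t = j ∧
    (∀ k, t < k → u k = j ∧ v k = i)

/-- The setoid identifying the two endpoints of every non-clique edge of `S_p^(n+1)`. -/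
def triSetoid (p n : Nat) : Setoid (Fin (n+1) → Fin p) :=
  Relation.EqvGen.setoid (nonCliqueRel p n)

/-- The generalized Sierpinski triangle graph: the contraction of all
non-clique edges of `S_p^(n+1)`. -/
def sierpinskiTriangle (p n : Nat) : SimpleGraph (Quotient (triSetoid p n)) where
  Adj x y := x ≠ y ∧ ∃ u v : Fin (n+1) → Fin p,
    Quotient.mk (triSetoid p n) u = x ∧ Quotient.mk (triSetoid p n) v = y ∧
    (sierpinski p (n+1)).Adj u v
  symm := ⟨by
    rintro x y ⟨hxy, u, v, hu, hv, h⟩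
    exact ⟨hxy.symm, v, u, hv, hu, h.symm⟩⟩
  loopless := ⟨by
    rintro x ⟨hxx, -⟩
    exact hxx rfl⟩

/-!
Contracting the non-clique edges of `S_p^2` identifies `ij` with `ji`, so `Ŝ_p^1` is the graph
on unordered pairs `{i, j}` (with `i = j` allowed) in which two pairs are adjacent when they
share an element. The pairs containing a fixed element form a clique, so an induced forest `Y`
contains at most two of them. Counting incidences gives `2 * #Y - #(diagonal pairs in Y) ≤ 2p`,
and there are only `p` diagonal pairs, hence `#Y ≤ ⌊3p/2⌋`. The `p` diagonal pairs together with
the pairs `{2k, 2k + 1}` attain this: they induce disjoint paths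
`{2k, 2k} – {2k, 2k + 1} – {2k + 1, 2k + 1}`.
-/

namespace SimpleGraph

variable {V W : Type*} {G : SimpleGraph V} {H : SimpleGraph W}

lemma Walk.IsCycle.neighborSet_nontrivial {u v : V} {c : G.Walk u u} (hc : c.IsCycle)
    (hv : v ∈ c.support) : (G.neighborSet v).Nontrivial := by
  classical
  have hc' := hc.rotate hv
  exact ⟨_, (c.rotate v hv).adj_snd hc'.not_nil, _,
    ((c.rotate v hv).adj_penultimate hc'.not_nil).symm, hc'.snd_ne_penultimate⟩

lemma isAcyclic_of_forall_adj_neighborSet_subsingleton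
    (h : ∀ u v, G.Adj u v → (G.neighborSet u).Subsingleton ∨ (G.neighborSet v).Subsingleton) :
    G.IsAcyclic := by
  intro u c hc
  have hsnd : c.snd ∈ c.support :=
    c.snd_mem_support_of_mem_edges (c.mk_start_snd_mem_edges hc.not_nil)
  rcases h u c.snd (c.adj_snd hc.not_nil) with hu | hu
  · exact (hc.neighborSet_nontrivial c.start_mem_support).not_subsingleton hu
  · exact (hc.neighborSet_nontrivial hsnd).not_subsingleton hu

lemma card_le_two_of_isClique_of_isAcyclic_induce {s : Set V} (hs : (G.induce s).IsAcyclic)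
    {t : Finset V} (hts : ↑t ⊆ s) (ht : G.IsClique t) : t.card ≤ 2 := by
  classical
  by_contra! h
  obtain ⟨x, hx, y, hy, z, hz, hxy, hxz, hyz⟩ := Finset.two_lt_card.mp h
  refine hs.cliqueFree le_rfl ({⟨x, hts hx⟩, ⟨y, hts hy⟩, ⟨z, hts hz⟩} : Finset s)
    (is3Clique_triple_iff.mpr ?_)
  exact ⟨ht hx hy hxy, ht hx hz hxz, ht hy hz hyz⟩

lemma Iso.isAcyclic_induce_image (φ : G ≃g H) {s : Set V} (hs : (G.induce s).IsAcyclic) :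
    (H.induce (φ '' s)).IsAcyclic :=
  hs.comap (induceHom φ.symm.toHom (by rintro _ ⟨v, hv, rfl⟩; simpa using hv))
    (induceHom_injective _ _ φ.symm.injective.injOn)

lemma Iso.exists_card_eq_isAcyclic_induce (φ : G ≃g H) {Y : Finset V}
    (hY : (G.induce Y).IsAcyclic) :
    ∃ Z : Finset W, Z.card = Y.card ∧ (H.induce Z).IsAcyclic :=
  ⟨Y.map φ.toEquiv.toEmbedding, Finset.card_map _,
    by rw [Finset.coe_map]; exact φ.isAcyclic_induce_image hY⟩

lemma Iso.maxInducedForest_eq (φ : G ≃g H) : maxInducedForest G = maxInducedForest H := by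
  unfold maxInducedForest
  congr 1
  ext k
  constructor
  · rintro ⟨Y, rfl, hY⟩
    exact φ.exists_card_eq_isAcyclic_induce hY
  · rintro ⟨Y, rfl, hY⟩
    exact φ.symm.exists_card_eq_isAcyclic_induce hY

end SimpleGraph

open Finset

def commonElementGraph (α : Type*) : SimpleGraph (Sym2 α) where
  Adj x y := x ≠ y ∧ ∃ a, a ∈ x ∧ a ∈ y
  symm := ⟨fun _ _ ⟨hxy, a, hx, hy⟩ => ⟨hxy.symm, a, hy, hx⟩⟩
  loopless := ⟨fun _ h => h.1 rfl⟩

lemma Sym2.card_toFinset_add_ite_isDiag {α : Type*} [DecidableEq α] (y : Sym2 α) :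
    #y.toFinset + (if y.IsDiag then 1 else 0) = 2 := by
  rw [Sym2.card_toFinset]; split_ifs <;> rfl

theorem card_le_of_isAcyclic_induce_commonElementGraph {α : Type*} [Fintype α] [DecidableEq α]
    {Y : Finset (Sym2 α)} (hY : ((commonElementGraph α).induce Y).IsAcyclic) :
    #Y ≤ Fintype.card α + Fintype.card α / 2 := by
  have hcontaining : ∀ a : α, #{y ∈ Y | a ∈ y} ≤ 2 := fun a =>
    card_le_two_of_isClique_of_isAcyclic_induce hY (fun y hy => (mem_filter.mp hy).1)
      fun x hx y hy hxy => ⟨hxy, a, (mem_filter.mp hx).2, (mem_filter.mp hy).2⟩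
  have hdiag : #{y ∈ Y | y.IsDiag} ≤ Fintype.card α :=
    calc #{y ∈ Y | y.IsDiag} ≤ #(univ.image Sym2.diag) := card_le_card fun y hy =>
          mem_image.mpr ⟨_, mem_univ _, Sym2.diag_diagElem (mem_filter.mp hy).2⟩
      _ ≤ Fintype.card α := card_image_le
  have hincidences : ∑ y ∈ Y, #y.toFinset ≤ 2 * Fintype.card α :=
    calc ∑ y ∈ Y, #y.toFinset = ∑ y ∈ Y, #(univ.bipartiteBelow (· ∈ ·) y) :=
          sum_congr rfl fun y _ => by congr 1; ext a; simp
      _ = ∑ a, #(Y.bipartiteAbove (· ∈ ·) a) :=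
          (sum_card_bipartiteAbove_eq_sum_card_bipartiteBelow _).symm
      _ ≤ ∑ _a : α, 2 := sum_le_sum fun a _ => hcontaining a
      _ = 2 * Fintype.card α := by simp [mul_comm]
  have hsplit : ∑ y ∈ Y, #y.toFinset + #{y ∈ Y | y.IsDiag} = 2 * #Y := by
    rw [card_filter, ← sum_add_distrib,
      sum_congr rfl fun y _ => Sym2.card_toFinset_add_ite_isDiag y, sum_const, smul_eq_mul,
      mul_comm]
  omega

section LowerBound

variable {p : ℕ}

def consecutivePair (k : Fin (p / 2)) : Sym2 (Fin p) :=
  s(⟨2 * k, by omega⟩, ⟨2 * k + 1, by omega⟩)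

def diagOrConsecutivePair : Fin p ⊕ Fin (p / 2) → Sym2 (Fin p) :=
  Sum.elim Sym2.diag consecutivePair

lemma diagOrConsecutivePair_injective : (diagOrConsecutivePair (p := p)).Injective := by
  rintro (a | k) (b | l) h <;>
    simp only [diagOrConsecutivePair, consecutivePair, Sum.elim_inl, Sum.elim_inr, Sym2.diag,
      Sym2.eq_iff, Fin.ext_iff] at h <;> grind

lemma not_adj_diag_diag (a b : Fin p) :
    ¬ (commonElementGraph (Fin p)).Adj (Sym2.diag a) (Sym2.diag b) := by
  rintro ⟨hne, c, hc, hc'⟩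
  simp_all [Sym2.diag]

lemma not_adj_consecutivePair (k l : Fin (p / 2)) :
    ¬ (commonElementGraph (Fin p)).Adj (consecutivePair k) (consecutivePair l) := by
  rintro ⟨hne, c, hc, hc'⟩
  simp only [consecutivePair, Sym2.mem_iff, Fin.ext_iff] at hc hc' hne
  grind

lemma val_eq_div_two_of_adj_diag_consecutivePair {a : Fin p} {k : Fin (p / 2)}
    (h : (commonElementGraph (Fin p)).Adj (Sym2.diag a) (consecutivePair k)) :
    (k : ℕ) = a / 2 := by
  obtain ⟨-, c, hc, hc'⟩ := h
  simp only [Sym2.diag, consecutivePair, Sym2.mem_iff, Fin.ext_iff] at hc hc'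
  omega

lemma isAcyclic_comap_diagOrConsecutivePair :
    ((commonElementGraph (Fin p)).comap (diagOrConsecutivePair (p := p))).IsAcyclic := by
  have hleaf (a : Fin p) : (((commonElementGraph (Fin p)).comap
      diagOrConsecutivePair).neighborSet (.inl a)).Subsingleton := by
    rintro (b | k) hk
    · exact (not_adj_diag_diag a b hk).elim
    rintro (c | l) hl
    · exact (not_adj_diag_diag a c hl).elim
    exact congrArg Sum.inr (Fin.ext ((val_eq_div_two_of_adj_diag_consecutivePair hk).trans
        (val_eq_div_two_of_adj_diag_consecutivePair hl).symm))
  refine isAcyclic_of_forall_adj_neighborSet_subsingleton ?_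
  rintro (a | k) (b | l) h
  · exact (not_adj_diag_diag a b h).elim
  · exact .inl (hleaf a)
  · exact .inr (hleaf b)
  · exact (not_adj_consecutivePair k l h).elim

theorem exists_card_eq_isAcyclic_induce_commonElementGraph (p : ℕ) :
    ∃ Y : Finset (Sym2 (Fin p)), #Y = p + p / 2 ∧
      ((commonElementGraph (Fin p)).induce Y).IsAcyclic := by
  let f : Fin p ⊕ Fin (p / 2) ↪ Sym2 (Fin p) := ⟨_, diagOrConsecutivePair_injective⟩
  refine ⟨univ.map f, by simp, ?_⟩
  rw [coe_map, coe_univ, Set.image_univ]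
  exact ((Embedding.comap f _).isoInduceRange.isAcyclic_iff).mp
    isAcyclic_comap_diagOrConsecutivePair

end LowerBound

section Sierpinski

variable {p n : ℕ}

lemma sierpinski_adj_succ {u v : Fin (n + 1) → Fin p} (h : (sierpinski p (n + 1)).Adj u v) :
    nonCliqueRel p n u v ∨ nonCliqueRel p n v u ∨ ∀ k < Fin.last n, u k = v k := by
  obtain ⟨-, ⟨t, i, j, hij, hlt, hu, hv, hgt⟩ | ⟨t, i, j, hij, hlt, hu, hv, hgt⟩⟩ := h
  all_goals by_cases ht : (t : ℕ) < n
  · exact .inl ⟨t, ht, i, j, hij, hlt, hu, hv, hgt⟩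
  · exact .inr <| .inr fun k hk => hlt k (by rw [Fin.lt_def, Fin.val_last] at hk; omega)
  · exact .inr <| .inl ⟨t, ht, i, j, hij, hlt, hu, hv, hgt⟩
  · exact .inr <| .inr fun k hk => (hlt k (by rw [Fin.lt_def, Fin.val_last] at hk; omega)).symm

lemma sierpinski_adj_of_forall_lt_last {u v : Fin (n + 1) → Fin p} (hne : u ≠ v)
    (h : ∀ k < Fin.last n, u k = v k) : (sierpinski p (n + 1)).Adj u v := by
  have hlast : u (Fin.last n) ≠ v (Fin.last n) := fun hl => hne <| funext fun k =>
    (Fin.le_last k).lt_or_eq.elim (h k) (fun hk => hk ▸ hl)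
  exact ⟨hne, .inl ⟨Fin.last n, _, _, hlast, h, rfl, rfl,
    fun k hk => (not_lt.mpr k.le_last hk).elim⟩⟩

lemma triSetoid_one_iff {u v : Fin 2 → Fin p} :
    triSetoid p 1 u v ↔ s(u 0, u 1) = s(v 0, v 1) := by
  constructor
  · refine fun h => Setoid.eqvGen_le (s := Setoid.ker fun w : Fin 2 → Fin p => s(w 0, w 1)) ?_ h
    rintro u v ⟨t, ht, i, j, -, -, hu, hv, hgt⟩
    obtain rfl : t = 0 := Fin.ext (by simp only [Fin.val_zero]; omega)
    obtain ⟨hu1, hv1⟩ := hgt 1 (by decide)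
    simp only [Setoid.ker_def, hu, hv, hu1, hv1, Sym2.eq_swap]
  · intro h
    rcases Sym2.eq_iff.mp h with ⟨h0, h1⟩ | ⟨h0, h1⟩
    · obtain rfl : u = v := funext (Fin.forall_fin_two.mpr ⟨h0, h1⟩)
      exact .refl _
    · by_cases hdiag : u 0 = u 1
      · obtain rfl : u = v := funext (Fin.forall_fin_two.mpr ⟨h1 ▸ hdiag, h0 ▸ hdiag.symm⟩)
        exact .refl _
      · refine .rel _ _ ⟨0, Nat.one_pos, _, _, hdiag, nofun, rfl, h1.symm, ?_⟩
        simp [Fin.forall_fin_two, h0]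

noncomputable def sierpinskiTriangleOneEquiv (p : ℕ) : Quotient (triSetoid p 1) ≃ Sym2 (Fin p) :=
  Equiv.ofBijective (Quotient.lift (fun u => s(u 0, u 1)) fun _ _ => triSetoid_one_iff.mp)
    ⟨fun x y => Quotient.inductionOn₂ x y fun _ _ h => Quotient.sound (triSetoid_one_iff.mpr h),
      Sym2.ind fun a b => ⟨Quotient.mk _ ![a, b], rfl⟩⟩

lemma sierpinskiTriangle_one_adj_iff {x y : Quotient (triSetoid p 1)} :
    (sierpinskiTriangle p 1).Adj x y ↔
      (commonElementGraph (Fin p)).Adj (sierpinskiTriangleOneEquiv p x)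
        (sierpinskiTriangleOneEquiv p y) := by
  constructor
  · rintro ⟨hne, u, v, rfl, rfl, hadj⟩
    refine ⟨(sierpinskiTriangleOneEquiv p).injective.ne hne, ?_⟩
    rcases sierpinski_adj_succ hadj with h | h | h
    · exact (hne (Quotient.sound (Relation.EqvGen.rel _ _ h))).elim
    · exact (hne (Quotient.sound (Relation.EqvGen.rel _ _ h)).symm).elim
    · exact ⟨u 0, Sym2.mem_mk_left _ _, h 0 (by decide) ▸ Sym2.mem_mk_left _ _⟩
  · rintro ⟨hne, a, hax, hay⟩
    obtain ⟨b, hb⟩ := Sym2.mem_iff_exists.mp hax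
    obtain ⟨c, hc⟩ := Sym2.mem_iff_exists.mp hay
    refine ⟨fun h => hne (h ▸ rfl), ![a, b], ![a, c],
      (sierpinskiTriangleOneEquiv p).injective hb.symm,
      (sierpinskiTriangleOneEquiv p).injective hc.symm,
      sierpinski_adj_of_forall_lt_last (fun h => hne ?_) (by simp)⟩
    rw [hb, hc, show b = c from congrFun h 1]

noncomputable def sierpinskiTriangleOneIso (p : ℕ) :
    sierpinskiTriangle p 1 ≃g commonElementGraph (Fin p) where
  toEquiv := sierpinskiTriangleOneEquiv p
  map_rel_iff' := sierpinskiTriangle_one_adj_iff.symm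

end Sierpinski

theorem maxInducedForest_commonElementGraph (p : ℕ) :
    maxInducedForest (commonElementGraph (Fin p)) = p + p / 2 := by
  refine IsGreatest.csSup_eq ⟨exists_card_eq_isAcyclic_induce_commonElementGraph p, ?_⟩
  rintro k ⟨Y, rfl, hY⟩
  simpa using card_le_of_isAcyclic_induce_commonElementGraph hY

theorem stmt18_general (p : Nat) :
    maxInducedForest (sierpinskiTriangle p 1) =
      if Even p then 3 * p / 2 else (3 * p - 1) / 2 := by
  rw [(sierpinskiTriangleOneIso p).maxInducedForest_eq, maxInducedForest_commonElementGraph]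
  split_ifs with hp
  · obtain ⟨k, rfl⟩ := hp; omega
  · obtain ⟨k, rfl⟩ := Nat.not_even_iff_odd.mp hp; omega

theorem stmt18 (p : Nat) (hp : 4 ≤ p) :
    maxInducedForest (sierpinskiTriangle p 1) =
      if Even p then 3 * p / 2 else (3 * p - 1) / 2 :=
  stmt18_general p
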